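/- arXiv:2410.22994 — 2 statements merged into one kernel-verified Lean document; each statement's English description precedes it below -/
import Mathlib

section
/- Let Γ be a distance-regular graph with classical parameters (D, b, α, β) and diameter D ≥ 3, such that b ≥ 1. Then α ≥ 0. -/
open SimpleGraph

namespace DRGPaper

variable {V : Type*}

/-- `Γ` is a distance-regular graph with diameter `D` and intersection arrays `cc`, `aa`, `bb`:
`Γ` is connected of diameter `D` and for any vertices `x, y` at distance `i ≤ D`, `y` has exactly
`cc i` neighbours at distance `i - 1` from `x`, `aa i` neighbours at distance `i` from `x`,
and `bb i` neighbours at distance `i + 1` from `x`. -/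
def IsDRG [Fintype V] (G : SimpleGraph V) (D : ℕ) (cc aa bb : ℕ → ℕ) : Prop :=
  G.Connected ∧
  (∀ x y : V, G.dist x y ≤ D) ∧
  (∃ x y : V, G.dist x y = D) ∧
  ∀ i : ℕ, i ≤ D → ∀ x y : V, G.dist x y = i →
    {z : V | G.Adj y z ∧ G.dist x z = i - 1}.ncard = cc i ∧
    {z : V | G.Adj y z ∧ G.dist x z = i}.ncard = aa i ∧
    {z : V | G.Adj y z ∧ G.dist x z = i + 1}.ncard = bb i

/-- `[j] = (b^j - 1)/(b - 1) = 1 + b + ⋯ + b^(j-1)` as a real number. -/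
def gauss (b j : ℕ) : ℝ := ∑ i ∈ Finset.range j, (b : ℝ) ^ i

/-- `Γ` has classical parameters `(D, b, α, β)`: it is distance-regular of diameter `D` with
`bb i = ([D] - [i])(β - α[i])` for `0 ≤ i ≤ D - 1` and `cc i = [i](1 + α[i-1])` for
`1 ≤ i ≤ D`. -/
def HasClassicalParams [Fintype V] (G : SimpleGraph V) (D b : ℕ) (α β : ℝ)
    (cc aa bb : ℕ → ℕ) : Prop :=
  IsDRG G D cc aa bb ∧
  (∀ i : ℕ, i ≤ D - 1 → (bb i : ℝ) = (gauss b D - gauss b i) * (β - α * gauss b i)) ∧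
  (∀ i : ℕ, 1 ≤ i → i ≤ D → (cc i : ℝ) = gauss b i * (1 + α * gauss b (i - 1)))

/-- `d(x, C) = min {d(x, y) : y ∈ C}`. -/
noncomputable def distToSet (G : SimpleGraph V) (x : V) (C : Set V) : ℕ :=
  sInf (G.dist x '' C)

/-- A maximal clique of `G`. -/
def IsMaxClique (G : SimpleGraph V) (s : Set V) : Prop :=
  G.IsClique s ∧ ∀ t : Set V, G.IsClique t → s ⊆ t → t = s

/-- The lines for the PLS(γ) property: maximal cliques with at least `γ` vertices. -/
def plsLines (G : SimpleGraph V) (γ : ℕ) : Set (Set V) :=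
  {ℓ : Set V | IsMaxClique G ℓ ∧ γ ≤ ℓ.ncard}

/-- `G` is the point graph of the partial linear space with line set `L`: any two adjacent
vertices lie on exactly one common line of `L`. -/
def IsPointGraphOf (G : SimpleGraph V) (L : Set (Set V)) : Prop :=
  ∀ x y : V, G.Adj x y → ∃! ℓ : Set V, ℓ ∈ L ∧ x ∈ ℓ ∧ y ∈ ℓ

/-- A vertex is a Delsarte vertex (w.r.t. the line set `L` and classical parameter `β`) if all
lines through it have exactly `β + 1` vertices. -/
def IsDelsarteVertex (L : Set (Set V)) (β : ℝ) (x : V) : Prop :=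
  ∀ ℓ ∈ L, x ∈ ℓ → (ℓ.ncard : ℝ) = β + 1

/-- The lines for the SPLS(c, s) property: maximal cliques with at least
`a1 + 2 - (c - 1)(s - 1)` vertices. -/
def splsLines (G : SimpleGraph V) (a1 c s : ℕ) : Set (Set V) :=
  {ℓ : Set V | IsMaxClique G ℓ ∧ (a1 : ℤ) + 2 - ((c : ℤ) - 1) * ((s : ℤ) - 1) ≤ (ℓ.ncard : ℤ)}

/-- The SPLS(c, s) property: `G` is the point graph of the partial linear space whose lines are
the maximal cliques with at least `a1 + 2 - (c-1)(s-1)` vertices, `a1 ≥ (2s-1)(c-1)`, each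
vertex lies on at most `s` lines, and every point not on a line `ℓ` is collinear with at most
`c` points of `ℓ`.  SPLS(s) is the case `c = c₂`. -/
def HasSPLS (G : SimpleGraph V) (a1 c s : ℕ) : Prop :=
  1 ≤ c ∧ 2 ≤ s ∧
  (2 * (s : ℤ) - 1) * ((c : ℤ) - 1) ≤ (a1 : ℤ) ∧
  IsPointGraphOf G (splsLines G a1 c s) ∧
  (∀ x : V, {ℓ ∈ splsLines G a1 c s | x ∈ ℓ}.ncard ≤ s) ∧
  (∀ ℓ ∈ splsLines G a1 c s, ∀ x : V, x ∉ ℓ → {y ∈ ℓ | G.Adj x y}.ncard ≤ c)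

/-- `[x, y]`: the set of lines `ℓ ∈ L` through `x` such that `d(y, u) ≤ 2` for all `u ∈ ℓ`. -/
def lineXY (G : SimpleGraph V) (L : Set (Set V)) (x y : V) : Set (Set V) :=
  {ℓ ∈ L | x ∈ ℓ ∧ ∀ u ∈ ℓ, G.dist y u ≤ 2}

/-- `𝓒` witnesses that `G` is geometric with cliques of order `q`: every member of `𝓒` is a
clique with exactly `q` vertices and every edge of `G` lies in a unique member of `𝓒`. -/
def IsGeomLineSet (G : SimpleGraph V) (q : ℝ) (𝓒 : Set (Set V)) : Prop :=
  (∀ C ∈ 𝓒, G.IsClique C ∧ (C.ncard : ℝ) = q) ∧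
  ∀ x y : V, G.Adj x y → ∃! C : Set V, C ∈ 𝓒 ∧ x ∈ C ∧ y ∈ C

/-- `G` is geometric: there is a set of Delsarte cliques (cliques of the maximum order `q`)
such that every edge lies in a unique member. -/
def IsGeometric (G : SimpleGraph V) (q : ℝ) : Prop :=
  ∃ 𝓒 : Set (Set V), IsGeomLineSet G q 𝓒

/-- An assembly: a maximal clique which is not a line. -/
def IsAssembly (G : SimpleGraph V) (𝓒 : Set (Set V)) (M : Set V) : Prop :=
  IsMaxClique G M ∧ M ∉ 𝓒

/-- The dual Pasch axiom: for every pair of adjacent vertices `x, y`, the common neighbours of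
`x` and `y` outside the (any) line of `𝓒` through `x` and `y` form a clique. -/
def DualPasch (G : SimpleGraph V) (𝓒 : Set (Set V)) : Prop :=
  ∀ x y : V, G.Adj x y → ∀ ℓ ∈ 𝓒, x ∈ ℓ → y ∈ ℓ →
    G.IsClique {z : V | G.Adj x z ∧ G.Adj y z ∧ z ∉ ℓ}

/-- The `m × n` grid, i.e. the Cartesian product `K_m □ K_n`. -/
def gridGraph (m n : ℕ) : SimpleGraph (Fin m × Fin n) :=
  (⊤ : SimpleGraph (Fin m)).boxProd (⊤ : SimpleGraph (Fin n))

/-- The `A`-clique extension of a graph `H`: replace every vertex of `H` by a clique of size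
`A`, vertices in distinct cliques being adjacent exactly when the underlying vertices of `H`
are adjacent. -/
def cliqueExt {W : Type*} (H : SimpleGraph W) (A : ℕ) : SimpleGraph (W × Fin A) :=
  SimpleGraph.fromRel (fun p q => H.Adj p.1 q.1 ∨ p.1 = q.1)

/-- `θ` is an eigenvalue of the adjacency matrix of `G`. -/
def IsAdjEigenvalue [Fintype V] (G : SimpleGraph V) [DecidableRel G.Adj] (θ : ℝ) : Prop :=
  ∃ v : V → ℝ, v ≠ 0 ∧ (G.adjMatrix ℝ).mulVec v = θ • v


lemma exists_adj_dist {V : Type*} {G : SimpleGraph V} (hconn : G.Connected) {x y : V} {n : ℕ}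
    (hd : G.dist x y = n + 1) : ∃ z, G.Adj y z ∧ G.dist x z = n := by
  obtain ⟨p, hp⟩ := hconn.exists_walk_length_eq_dist y x
  rw [SimpleGraph.dist_comm, hd] at hp
  cases p with
  | nil => simp at hp
  | @cons _ z _ ha r =>
    refine ⟨z, ha, ?_⟩
    have hr : r.length = n := by simpa using hp
    have h1 : G.dist x z ≤ n := by
      have := SimpleGraph.dist_le r.reverse
      simpa [hr] using this
    have h2 : G.dist z y = 1 := by
      rw [SimpleGraph.dist_eq_one_iff_adj]; exact ha.symm
    have h3 : G.dist x y ≤ G.dist x z + G.dist z y := hconn.dist_triangle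
    omega

lemma exists_dist_eq {V : Type*} {G : SimpleGraph V} (hconn : G.Connected) {x y : V} {n : ℕ}
    (hd : G.dist x y = n) : ∀ m ≤ n, ∃ z, G.dist x z = m := by
  induction n generalizing y with
  | zero =>
    intro m hm
    exact ⟨x, by simpa [Nat.le_zero.mp hm] using G.dist_self (v := x)⟩
  | succ n ih =>
    intro m hm
    rcases Nat.lt_succ_iff_lt_or_eq.mp (Nat.lt_succ_of_le hm) with h | h
    · obtain ⟨z, _, hz⟩ := exists_adj_dist hconn hd
      exact ih hz m (Nat.lt_succ_iff.mp h)
    · exact ⟨y, by omega⟩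

lemma gauss_one (b : ℕ) : gauss b 1 = 1 := by simp [gauss]

lemma gauss_two (b : ℕ) : gauss b 2 = 1 + (b : ℝ) := by
  simp [gauss, Finset.sum_range_succ]

lemma gauss_three (b : ℕ) : gauss b 3 = 1 + (b : ℝ) + (b : ℝ) ^ 2 := by
  simp [gauss, Finset.sum_range_succ]

/-- Let `Γ` be a distance-regular graph with classical parameters
`(D, b, α, β)` and diameter `D ≥ 3`, such that `b ≥ 1`. Then `α ≥ 0`. -/
theorem statement_0 {V : Type*} [Fintype V] (G : SimpleGraph V) (D b : ℕ) (α β : ℝ)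
    (cc aa bb : ℕ → ℕ) (hb : 1 ≤ b) (hD : 3 ≤ D)
    (h : HasClassicalParams G D b α β cc aa bb) :
    0 ≤ α := by
  obtain ⟨hDRG, hbb, hcc⟩ := h
  obtain ⟨hconn, _, ⟨x0, y0, hxy⟩, hreg⟩ := hDRG
  have hB1 : (1 : ℝ) ≤ (b : ℝ) := by exact_mod_cast hb
  -- c₂ and c₃ formulas
  have hc2 : (cc 2 : ℝ) = (1 + (b : ℝ)) * (1 + α) := by
    have := hcc 2 (by norm_num) (by omega)
    rw [this, gauss_two, gauss_one]; ring
  have hc3 : (cc 3 : ℝ) = (1 + (b : ℝ) + (b : ℝ) ^ 2) * (1 + α * (1 + (b : ℝ))) := by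
    have := hcc 3 (by norm_num) (by omega)
    rw [this, gauss_three, gauss_two]
  -- c₃ ≥ 1
  have hc3pos : 1 ≤ cc 3 := by
    obtain ⟨y, hy3⟩ := exists_dist_eq hconn hxy 3 hD
    obtain ⟨z, hadj, hz2⟩ := exists_adj_dist hconn hy3
    have hset := (hreg 3 hD x0 y hy3).1
    have hne : ({z : V | G.Adj y z ∧ G.dist x0 z = 3 - 1} : Set V).Nonempty :=
      ⟨z, hadj, hz2⟩
    have := (Set.ncard_pos (Set.toFinite _)).mpr hne
    omega
  have hc3R : (1 : ℝ) ≤ (cc 3 : ℝ) := by exact_mod_cast hc3pos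
  have key : (cc 3 : ℝ) = (1 + (b : ℝ) + (b : ℝ) ^ 2) * ((cc 2 : ℝ) - (b : ℝ)) := by
    linear_combination hc3 - (1 + (b : ℝ) + (b : ℝ) ^ 2) * hc2
  have hlt : (b : ℝ) < (cc 2 : ℝ) := by nlinarith
  have hlt' : b < cc 2 := by exact_mod_cast hlt
  have hge : (1 : ℝ) + (b : ℝ) ≤ (cc 2 : ℝ) := by
    have : b + 1 ≤ cc 2 := hlt'
    have h' : ((b : ℝ)) + 1 ≤ (cc 2 : ℝ) := by exact_mod_cast this
    linarith
  nlinarith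
end DRGPaper
end

section
/- Let Γ be a distance-regular graph with classical parameters (D, b, α, β) with b ≥ 2 and D ≥ 2, and let r = [D]. Let (u_i)_{0≤i≤D} be the standard sequence corresponding to the smallest eigenvalue −r of Γ, i.e. u_0 = 1, u_1 = −r/k = −1/β, and c_i u_{i−1} + a_i u_i + b_i u_{i+1} = −r u_i for 1 ≤ i ≤ D−1. Then u_i = ((−1)^i/β) · (1 + α[1])(1 + α[2])⋯(1 + α[i−1]) / ((β − α[1])(β − α[2])⋯(β − α[i−1])) for all 1 ≤ i ≤ D. -/
open SimpleGraph

namespace DRGPaper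

variable {V : Type*}

lemma gauss_zero (b : ℕ) : gauss b 0 = 0 := by simp [gauss]

lemma gauss_pos {b i : ℕ} (hb : 1 ≤ b) (hi : 1 ≤ i) : 0 < gauss b i := by
  have hb' : (0 : ℝ) < b := by exact_mod_cast hb
  exact Finset.sum_pos (fun j _ => pow_pos hb' j) ⟨0, by simpa using (show 0 < i by omega)⟩

lemma gauss_lt {b i j : ℕ} (hb : 1 ≤ b) (h : i < j) : gauss b i < gauss b j := by
  have hb' : (0 : ℝ) < b := by exact_mod_cast hb
  refine Finset.sum_lt_sum_of_subset (Finset.range_subset_range.mpr h.le)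
    (Finset.mem_range.mpr h) (by simp) (pow_pos hb' i) ?_
  exact fun k _ _ => (pow_pos hb' k).le

lemma dist_getVert_le {G : SimpleGraph V} (hc : G.Connected) {x y : V} (p : G.Walk x y) :
    ∀ i, G.dist x (p.getVert i) ≤ i := by
  intro i
  induction i with
  | zero => simp [p.getVert_zero, SimpleGraph.dist_self]
  | succ n ih =>
    by_cases hn : n < p.length
    · have hadj := p.adj_getVert_succ hn
      calc G.dist x (p.getVert (n + 1))
          ≤ G.dist x (p.getVert n) + G.dist (p.getVert n) (p.getVert (n + 1)) :=
            hc.dist_triangle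
        _ ≤ n + 1 := by
            rw [SimpleGraph.dist_eq_one_iff_adj.mpr hadj]; omega
    · rw [p.getVert_of_length_le (by omega)]
      calc G.dist x y ≤ p.length := SimpleGraph.dist_le p
        _ ≤ n + 1 := by omega

lemma dist_getVert {G : SimpleGraph V} (hc : G.Connected) {x y : V} {D : ℕ}
    (hxy : G.dist x y = D) (p : G.Walk x y) (hp : p.length = D) {i : ℕ} (hi : i ≤ D) :
    G.dist x (p.getVert i) = i := by
  have h1 : G.dist x (p.getVert i) ≤ i := dist_getVert_le hc p i
  have h2 : G.dist y (p.getVert i) ≤ D - i := by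
    have h := dist_getVert_le hc p.reverse (D - i)
    rw [p.getVert_reverse, hp, (by omega : D - (D - i) = i)] at h
    exact h
  have h3 : D ≤ G.dist x (p.getVert i) + (D - i) := by
    calc D = G.dist x y := hxy.symm
      _ ≤ G.dist x (p.getVert i) + G.dist (p.getVert i) y := hc.dist_triangle
      _ ≤ G.dist x (p.getVert i) + (D - i) := by
          have hcm : G.dist (p.getVert i) y = G.dist y (p.getVert i) := SimpleGraph.dist_comm
          omega
  omega

/-- Basic counting facts for distance-regular graphs: `bb i ≥ 1` for `i ≤ D - 1`, and the
valency relation `cc i + aa i + bb i = bb 0` for `1 ≤ i ≤ D - 1`. -/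
lemma drg_facts [Fintype V] {G : SimpleGraph V} {D : ℕ} {cc aa bb : ℕ → ℕ}
    (h : IsDRG G D cc aa bb) (hD : 1 ≤ D) :
    (∀ i, i ≤ D - 1 → 1 ≤ bb i) ∧
    (∀ i, 1 ≤ i → i ≤ D - 1 → cc i + aa i + bb i = bb 0) := by
  obtain ⟨hconn, -, ⟨x, y, hxy⟩, hint⟩ := h
  obtain ⟨p, hp⟩ := hconn.exists_walk_length_eq_dist x y
  rw [hxy] at hp
  constructor
  · intro i hi
    have hiD : i < D := by omega
    have hdi : G.dist x (p.getVert i) = i := dist_getVert hconn hxy p hp (by omega)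
    have hdi1 : G.dist x (p.getVert (i + 1)) = i + 1 := dist_getVert hconn hxy p hp (by omega)
    have hadj : G.Adj (p.getVert i) (p.getVert (i + 1)) := p.adj_getVert_succ (by omega)
    obtain ⟨-, -, h3⟩ := hint i (by omega) x (p.getVert i) hdi
    rw [← h3]
    exact (Set.ncard_pos (Set.toFinite _)).mpr ⟨p.getVert (i + 1), hadj, hdi1⟩
  · intro i hi1 hi
    set z := p.getVert i with hz
    have hdi : G.dist x z = i := dist_getVert hconn hxy p hp (by omega)
    obtain ⟨h1, h2, h3⟩ := hint i (by omega) x z hdi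
    obtain ⟨-, -, h0⟩ := hint 0 (by omega) z z (SimpleGraph.dist_self)
    have hset0 : {w : V | G.Adj z w ∧ G.dist z w = 0 + 1} = {w : V | G.Adj z w} := by
      ext w
      simp only [Set.mem_setOf_eq, zero_add, and_iff_left_iff_imp]
      exact fun hw => SimpleGraph.dist_eq_one_iff_adj.mpr hw
    rw [hset0] at h0
    have hunion : {w : V | G.Adj z w} =
        ({w : V | G.Adj z w ∧ G.dist x w = i - 1} ∪ {w : V | G.Adj z w ∧ G.dist x w = i}) ∪
        {w : V | G.Adj z w ∧ G.dist x w = i + 1} := by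
      ext w
      simp only [Set.mem_union, Set.mem_setOf_eq]
      constructor
      · intro hw
        have hzw : G.dist z w = 1 := SimpleGraph.dist_eq_one_iff_adj.mpr hw
        have t1 : G.dist x w ≤ G.dist x z + G.dist z w := hconn.dist_triangle
        have t2 : G.dist x z ≤ G.dist x w + G.dist w z := hconn.dist_triangle
        rw [SimpleGraph.dist_comm (u := w) (v := z)] at t2
        have : G.dist x w = i - 1 ∨ G.dist x w = i ∨ G.dist x w = i + 1 := by omega
        tauto
      · rintro ((⟨hw, -⟩ | ⟨hw, -⟩) | ⟨hw, -⟩) <;> exact hw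
    have hd1 : Disjoint {w : V | G.Adj z w ∧ G.dist x w = i - 1}
        {w : V | G.Adj z w ∧ G.dist x w = i} := by
      rw [Set.disjoint_left]
      rintro w ⟨-, hw1⟩ ⟨-, hw2⟩
      omega
    have hd2 : Disjoint
        ({w : V | G.Adj z w ∧ G.dist x w = i - 1} ∪ {w : V | G.Adj z w ∧ G.dist x w = i})
        {w : V | G.Adj z w ∧ G.dist x w = i + 1} := by
      rw [Set.disjoint_left]
      rintro w (⟨-, hw1⟩ | ⟨-, hw1⟩) ⟨-, hw2⟩ <;> omega
    rw [hunion, Set.ncard_union_eq hd2 (Set.toFinite _) (Set.toFinite _),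
      Set.ncard_union_eq hd1 (Set.toFinite _) (Set.toFinite _), h1, h2, h3] at h0
    omega

/-- the standard sequence corresponding to the smallest eigenvalue `-r`
of a distance-regular graph with classical parameters `(D, b, α, β)`, `b ≥ 2`, `D ≥ 2`. -/
theorem statement_1 {V : Type*} [Fintype V] (G : SimpleGraph V) (D b : ℕ) (α β : ℝ)
    (cc aa bb : ℕ → ℕ) (hb : 2 ≤ b) (hD : 2 ≤ D)
    (h : HasClassicalParams G D b α β cc aa bb)
    (u : ℕ → ℝ) (hu0 : u 0 = 1) (hu1 : u 1 = -(1 / β))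
    (hrec : ∀ i : ℕ, 1 ≤ i → i ≤ D - 1 →
      (cc i : ℝ) * u (i - 1) + (aa i : ℝ) * u i + (bb i : ℝ) * u (i + 1)
        = -(gauss b D) * u i) :
    ∀ i : ℕ, 1 ≤ i → i ≤ D →
      u i = ((-1 : ℝ) ^ i / β) *
        ((∏ j ∈ Finset.Icc 1 (i - 1), (1 + α * gauss b j)) /
         (∏ j ∈ Finset.Icc 1 (i - 1), (β - α * gauss b j))) := by
  obtain ⟨hdrg, hbb, hcc⟩ := h
  have hb1 : 1 ≤ b := by omega
  obtain ⟨hbpos, hsum⟩ := drg_facts hdrg (by omega)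
  -- positivity of β - α [i] for i ≤ D - 1
  have hβα : ∀ i, i ≤ D - 1 → 0 < β - α * gauss b i := by
    intro i hi
    have h1 : (1 : ℝ) ≤ bb i := by exact_mod_cast hbpos i hi
    rw [hbb i hi] at h1
    have h2 : 0 < gauss b D - gauss b i := sub_pos.mpr (gauss_lt hb1 (by omega))
    by_contra hcon
    push_neg at hcon
    nlinarith
  have hβ : 0 < β := by
    have := hβα 0 (by omega)
    rw [gauss_zero] at this
    linarith
  have hβ' : β ≠ 0 := ne_of_gt hβ
  have hk : (bb 0 : ℝ) = gauss b D * β := by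
    rw [hbb 0 (by omega), gauss_zero]
    ring
  -- the two-term recurrence for the standard sequence
  have hL : ∀ i, 1 ≤ i → i ≤ D →
      u (i - 1) * (1 + α * gauss b (i - 1)) = -(β - α * gauss b (i - 1)) * u i := by
    intro i hi1
    induction i, hi1 using Nat.le_induction with
    | base =>
      intro _
      simp only [Nat.sub_self, gauss_zero, hu0, hu1, mul_zero, sub_zero]
      field_simp
      norm_num
    | succ i hi ih =>
      intro hiD
      have hiD' : i ≤ D - 1 := by omega
      have hLi := ih (by omega)
      have hr := hrec i hi hiD'
      have ha : (aa i : ℝ) = (bb 0 : ℝ) - bb i - cc i := by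
        have := hsum i hi hiD'
        have : (cc i : ℝ) + aa i + bb i = bb 0 := by exact_mod_cast this
        linarith
      rw [ha, hk, hcc i hi (by omega), hbb i hiD'] at hr
      have key : (gauss b D - gauss b i) *
          ((β - α * gauss b i) * u (i + 1) + (1 + α * gauss b i) * u i) = 0 := by
        linear_combination hr - gauss b i * hLi
      have hpos : (0 : ℝ) < gauss b D - gauss b i := sub_pos.mpr (gauss_lt hb1 (by omega))
      have key2 : (β - α * gauss b i) * u (i + 1) + (1 + α * gauss b i) * u i = 0 := by
        rcases mul_eq_zero.mp key with hc | hc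
        · exact absurd hc (ne_of_gt hpos)
        · exact hc
      rw [Nat.succ_sub_one]
      linarith [key2]
  -- final formula by induction
  intro i hi1
  induction i, hi1 using Nat.le_induction with
  | base =>
    intro _
    rw [hu1, show (1 : ℕ) - 1 = 0 from rfl, Finset.Icc_eq_empty (by omega)]
    simp
    field_simp
  | succ i hi ih =>
    intro hiD
    have IH := ih (by omega)
    have hLL := hL (i + 1) (by omega) hiD
    rw [Nat.add_sub_cancel] at hLL ⊢
    rw [IH] at hLL
    have hQ : ∀ f : ℕ → ℝ, ∏ j ∈ Finset.Icc 1 i, f j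
        = (∏ j ∈ Finset.Icc 1 (i - 1), f j) * f i := by
      intro f
      conv_lhs => rw [show i = (i - 1) + 1 by omega]
      rw [Finset.prod_Icc_succ_top (by omega)]
      rw [show (i - 1) + 1 = i by omega]
    rw [hQ, hQ]
    have hne1 : β - α * gauss b i ≠ 0 := ne_of_gt (hβα i (by omega))
    have hne2 : (∏ j ∈ Finset.Icc 1 (i - 1), (β - α * gauss b j)) ≠ 0 := by
      refine ne_of_gt (Finset.prod_pos fun j hj => ?_)
      have hj' := Finset.mem_Icc.mp hj
      exact hβα j (by omega)
    have hu' : u (i + 1) = -((((-1 : ℝ) ^ i / β) *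
        ((∏ j ∈ Finset.Icc 1 (i - 1), (1 + α * gauss b j)) /
         (∏ j ∈ Finset.Icc 1 (i - 1), (β - α * gauss b j)))) * (1 + α * gauss b i)) /
        (β - α * gauss b i) := by
      rw [eq_div_iff hne1]
      linarith [hLL]
    rw [hu']
    rw [pow_succ]
    field_simp
end DRGPaper
end
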